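/- For every p > 1 there exists a constant c > 0 depending only on p such that for all real numbers u₁, u₂, k and all σ, τ ≥ 0, writing w₁ = (u₁ − k)_+ and w₂ = (u₂ − k)_+, one has sign(u₁ − u₂)·|u₁ − u₂|^{p−1}·(w₁·σ^p − w₂·τ^p) ≥ (1/2)·|w₁ − w₂|^p·(max{σ, τ})^p − c·(max{w₁, w₂})^p·|σ − τ|^p. -/

import Mathlib

open Real

lemma rpow_pred_mul' (x : ℝ) (hx : 0 ≤ x) {p : ℝ} (hp : p ≠ 0) :
    x ^ (p-1) * x = x ^ p := by
  calc x^(p-1)*x = x^(p-1) * x^(1:ℝ) := by rw [Real.rpow_one]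
  _ = x^((p-1)+1) := (Real.rpow_add' hx (by simpa using hp)).symm
  _ = x^p := by norm_num

/-- (a+b)^p ≤ 2 a^p + C b^p -/
lemma split_lem (p : ℝ) (hp : 1 < p) :
    ∃ C : ℝ, 0 < C ∧ ∀ a b : ℝ, 0 ≤ a → 0 ≤ b → (a + b) ^ p ≤ 2 * a ^ p + C * b ^ p := by
  have hp0 : (0:ℝ) < p := by linarith
  set η : ℝ := 2 ^ (1/p) - 1 with hηdef
  have hη0 : 0 < η := by
    have h2 : (1:ℝ) < 2 ^ (1/p) :=
      (Real.one_lt_rpow_iff_of_pos (by norm_num)).2 (Or.inl ⟨by norm_num, by positivity⟩)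
    simp only [hηdef]; linarith
  have hpow : ((1:ℝ)+η) ^ p = 2 := by
    have h1 : (1:ℝ)+η = 2 ^ (1/p) := by simp [hηdef]
    rw [h1, ← Real.rpow_mul (by norm_num), one_div, inv_mul_cancel₀ (ne_of_gt hp0),
      Real.rpow_one]
  refine ⟨((1+η)/η) ^ p, by positivity, fun a b ha hb => ?_⟩
  rcases le_or_gt b (η * a) with h | h
  · have h1 : a + b ≤ (1+η) * a := by nlinarith
    have h2 : (a+b)^p ≤ ((1+η)*a)^p := Real.rpow_le_rpow (by linarith) h1 hp0.le
    have h3 : ((1+η)*a)^p = 2 * a^p := by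
      rw [Real.mul_rpow (by positivity) ha, hpow]
    have h4 : 0 ≤ ((1+η)/η)^p * b^p := by positivity
    linarith
  · have hab : a + b ≤ ((1+η)/η) * b := by
      have ha' : a ≤ b / η := le_of_lt ((lt_div_iff₀ hη0).2 (by nlinarith))
      have : ((1+η)/η) * b = b/η + b := by field_simp
      linarith
    have h2 : (a+b)^p ≤ (((1+η)/η)*b)^p := Real.rpow_le_rpow (by linarith) hab hp0.le
    have h3 : (((1+η)/η)*b)^p = ((1+η)/η)^p * b^p := Real.mul_rpow (by positivity) hb
    have h4 : 0 ≤ 2 * a^p := by positivity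
    linarith

/-- Young-type: p A^(p-1) B ≤ (1/2) A^p + C B^p -/
lemma young_lem (p : ℝ) (hp : 1 < p) :
    ∃ C : ℝ, 0 < C ∧ ∀ A B : ℝ, 0 ≤ A → 0 ≤ B →
      p * A ^ (p-1) * B ≤ (1/2) * A ^ p + C * B ^ p := by
  have hp0 : (0:ℝ) < p := by linarith
  refine ⟨p * (2*p) ^ (p-1) + 1, by positivity, fun A B hA hB => ?_⟩
  rcases le_or_gt B (A / (2*p)) with h | h
  · have h1 : p * A ^ (p-1) * B ≤ p * A ^ (p-1) * (A/(2*p)) := by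
      have : (0:ℝ) ≤ p * A ^ (p-1) := by positivity
      exact mul_le_mul_of_nonneg_left h this
    have h2 : p * A ^ (p-1) * (A/(2*p)) = (1/2) * (A^(p-1) * A) := by
      field_simp
    have h3 : A^(p-1) * A = A^p := rpow_pred_mul' A hA (ne_of_gt hp0)
    have h4 : (0:ℝ) ≤ (p * (2*p)^(p-1) + 1) * B^p := by positivity
    rw [h2, h3] at h1; linarith
  · have hA' : A < 2*p*B := by
      rw [div_lt_iff₀ (by positivity)] at h; linarith [h]
    have h1 : A ^ (p-1) ≤ (2*p*B) ^ (p-1) :=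
      Real.rpow_le_rpow hA hA'.le (by linarith)
    have h2 : (2*p*B)^(p-1) = (2*p)^(p-1) * B^(p-1) :=
      Real.mul_rpow (by positivity) hB
    have h3 : p * A^(p-1) * B ≤ p * ((2*p)^(p-1) * B^(p-1)) * B := by
      rw [← h2]
      have : (0:ℝ) ≤ B := hB
      nlinarith [Real.rpow_nonneg hA (p-1)]
    have h4 : p * ((2*p)^(p-1) * B^(p-1)) * B = p * (2*p)^(p-1) * (B^(p-1) * B) := by ring
    have h5 : B^(p-1) * B = B^p := rpow_pred_mul' B hB (ne_of_gt hp0)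
    have h6 : (0:ℝ) ≤ (1/2) * A^p := by positivity
    have h7 : (0:ℝ) ≤ B^p := Real.rpow_nonneg hB p
    have : p * A^(p-1) * B ≤ p * (2*p)^(p-1) * B^p := by rw [h4, h5] at h3; linarith
    nlinarith

/-- Tangent line / Bernoulli: τ^p - σ^p ≤ p τ^(p-1) (τ-σ) for 0 ≤ σ ≤ τ. -/
lemma tangent_lem (p : ℝ) (hp : 1 < p) {σ τ : ℝ} (hσ : 0 ≤ σ) (hστ : σ ≤ τ) :
    τ ^ p - σ ^ p ≤ p * τ ^ (p-1) * (τ - σ) := by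
  have hτ : 0 ≤ τ := le_trans hσ hστ
  rcases eq_or_lt_of_le hτ with h0 | h0
  · have hτ0 : τ = 0 := h0.symm
    have hσ0 : σ = 0 := le_antisymm (hτ0 ▸ hστ) hσ
    simp [hτ0, hσ0, Real.zero_rpow (by linarith : p ≠ 0)]
  · set s : ℝ := σ / τ - 1 with hs
    have hs1 : -1 ≤ s := by
      have : 0 ≤ σ / τ := by positivity
      simp only [hs]; linarith
    have hB := one_add_mul_self_le_rpow_one_add hs1 hp.le
    have h1s : 1 + s = σ / τ := by simp [hs]
    rw [h1s] at hB
    have hdiv : (σ/τ)^p = σ^p / τ^p := Real.div_rpow hσ hτ p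
    rw [hdiv] at hB
    -- hB : 1 + p * s ≤ σ^p / τ^p
    have hτp : 0 < τ ^ p := Real.rpow_pos_of_pos h0 p
    have hmul := mul_le_mul_of_nonneg_right hB hτp.le
    rw [div_mul_cancel₀ _ (ne_of_gt hτp)] at hmul
    -- hmul : (1 + p*s) * τ^p ≤ σ^p
    have hsplit : τ^(p-1) * τ = τ^p := rpow_pred_mul' τ hτ (by linarith)
    have hst : s * τ = σ - τ := by rw [hs, sub_mul, div_mul_cancel₀ σ (ne_of_gt h0), one_mul]
    have key : (1 + p*s) * τ^p = τ^p + p * τ^(p-1) * (σ - τ) := by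
      rw [← hsplit,
        show (1+p*s)*(τ^(p-1)*τ) = τ^(p-1)*τ + p*(s*τ)*τ^(p-1) from by ring, hst]
      ring
    have hg : p * τ^(p-1) * (τ-σ) = -(p * τ^(p-1) * (σ-τ)) := by ring
    rw [key] at hmul
    linarith

/-- Key ordered inequality. -/
lemma key_lem (p : ℝ) (hp : 1 < p) :
    ∃ c : ℝ, 0 < c ∧ ∀ w₁ w₂ L σ τ : ℝ, 0 ≤ w₂ → w₂ ≤ w₁ → w₁ - w₂ ≤ L →
      (0 < w₂ → L = w₁ - w₂) → 0 ≤ σ → 0 ≤ τ →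
      L ^ (p-1) * (w₁ * σ ^ p - w₂ * τ ^ p) ≥
        (1/2) * (w₁ - w₂) ^ p * (max σ τ) ^ p - c * w₁ ^ p * |σ - τ| ^ p := by
  have hp0 : (0:ℝ) < p := by linarith
  obtain ⟨C₁, hC₁, hY⟩ := young_lem p hp
  obtain ⟨C₂, hC₂, hS⟩ := split_lem p hp
  refine ⟨C₁ + C₂ + 1, by positivity, fun w₁ w₂ L σ τ hw₂ hw₁₂ hWL hLeq hσ hτ => ?_⟩
  have hw₁ : 0 ≤ w₁ := le_trans hw₂ hw₁₂
  have hW : 0 ≤ w₁ - w₂ := by linarith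
  have hL : 0 ≤ L := le_trans hW hWL
  have habs : 0 ≤ |σ - τ| ^ p := Real.rpow_nonneg (abs_nonneg _) p
  have hw₁p : 0 ≤ w₁ ^ p := Real.rpow_nonneg hw₁ p
  rcases le_or_gt τ σ with hστ | hστ
  · -- case σ ≥ τ : max = σ
    have hmax : max σ τ = σ := max_eq_left hστ
    have h1 : τ ^ p ≤ σ ^ p := Real.rpow_le_rpow hτ hστ hp0.le
    have h2 : (w₁ - w₂) * σ ^ p ≤ w₁ * σ ^ p - w₂ * τ ^ p := by nlinarith
    have h3 : (w₁ - w₂) ^ (p-1) ≤ L ^ (p-1) :=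
      Real.rpow_le_rpow hW hWL (by linarith)
    have h4 : 0 ≤ (w₁ - w₂) * σ ^ p := by positivity
    have h5 : (w₁-w₂)^(p-1) * ((w₁-w₂) * σ^p) ≤ L^(p-1) * (w₁ * σ^p - w₂*τ^p) := by
      apply mul_le_mul h3 h2 h4 (Real.rpow_nonneg hL _)
    have h6 : (w₁-w₂)^(p-1) * ((w₁-w₂) * σ^p) = (w₁-w₂)^p * σ^p := by
      rw [show (w₁-w₂)^(p-1) * ((w₁-w₂) * σ^p) = ((w₁-w₂)^(p-1) * (w₁-w₂)) * σ^p
          from by ring, rpow_pred_mul' (w₁-w₂) hW (by linarith)]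
    have h7 : 0 ≤ (w₁-w₂)^p * σ^p := by positivity
    have h8 : 0 ≤ (C₁+C₂+1) * w₁^p * |σ-τ|^p := by positivity
    rw [h6] at h5
    rw [hmax]
    linarith
  · -- case τ > σ : max = τ, δ = τ - σ
    have hmax : max σ τ = τ := max_eq_right hστ.le
    have habs' : |σ - τ| = τ - σ := by rw [abs_sub_comm]; exact abs_of_nonneg (by linarith)
    rw [hmax, habs']
    rcases eq_or_lt_of_le hw₂ with hw₂0 | hw₂0
    · -- w₂ = 0
      have hw₂0 : w₂ = 0 := hw₂0.symm
      subst hw₂0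
      have hLw : w₁ ≤ L := by linarith
      have h1 : w₁^(p-1) ≤ L^(p-1) := Real.rpow_le_rpow hw₁ hLw (by linarith)
      have h2 : w₁^(p-1) * (w₁ * σ^p) ≤ L^(p-1) * (w₁ * σ^p - 0 * τ^p) := by
        rw [zero_mul, sub_zero]
        exact mul_le_mul_of_nonneg_right h1 (by positivity)
      have h3 : w₁^(p-1) * (w₁ * σ^p) = w₁^p * σ^p := by
        rw [show w₁^(p-1) * (w₁ * σ^p) = (w₁^(p-1) * w₁) * σ^p from by ring,
          rpow_pred_mul' w₁ hw₁ (by linarith)]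
      rw [h3] at h2
      -- need (1/2) w₁^p τ^p ≤ w₁^p σ^p + c w₁^p (τ-σ)^p
      have hτs : τ = σ + (τ - σ) := by ring
      have h4 : τ ^ p ≤ 2 * σ^p + C₂ * (τ-σ)^p := by
        calc τ ^ p = (σ + (τ-σ)) ^ p := by rw [← hτs]
        _ ≤ 2 * σ^p + C₂ * (τ-σ)^p := hS σ (τ-σ) hσ (by linarith)
      have h5 : (1/2) * (w₁ - 0)^p * τ^p ≤ w₁^p * σ^p + (C₁+C₂+1) * w₁^p * (τ-σ)^p := by
        rw [sub_zero]
        have := mul_le_mul_of_nonneg_left h4 (by positivity : (0:ℝ) ≤ (1/2) * w₁^p)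
        have hδp : 0 ≤ (τ - σ)^p := Real.rpow_nonneg (by linarith) p
        nlinarith [mul_nonneg hw₁p hδp, hC₁.le, hC₂.le]
      linarith
    · -- w₂ > 0 : L = w₁ - w₂
      have hLeq' := hLeq hw₂0
      subst hLeq'
      set W := w₁ - w₂ with hWdef
      have htan : τ^p - σ^p ≤ p * τ^(p-1) * (τ - σ) := tangent_lem p hp hσ hστ.le
      have h1 : W * τ^p - w₁ * (p * τ^(p-1) * (τ-σ)) ≤ w₁ * σ^p - w₂ * τ^p := by
        have h0 := mul_le_mul_of_nonneg_left htan hw₁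
        rw [hWdef]
        nlinarith [h0]
      have h2 : W^(p-1) * (W * τ^p - w₁ * (p * τ^(p-1) * (τ-σ)))
          ≤ W^(p-1) * (w₁ * σ^p - w₂ * τ^p) :=
        mul_le_mul_of_nonneg_left h1 (Real.rpow_nonneg hW _)
      have hWp : W^(p-1) * (W * τ^p) = W^p * τ^p := by
        rw [show W^(p-1) * (W * τ^p) = (W^(p-1) * W) * τ^p from by ring,
          rpow_pred_mul' W hW (by linarith)]
      have hWτ : W^(p-1) * τ^(p-1) = (W*τ)^(p-1) := (Real.mul_rpow hW hτ).symm
      have hWτp : W^p * τ^p = (W*τ)^p := (Real.mul_rpow hW hτ).symm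
      have hy := hY (W*τ) (w₁*(τ-σ)) (mul_nonneg hW hτ) (mul_nonneg hw₁ (by linarith))
      -- hy : p * (W*τ)^(p-1) * (w₁*(τ-σ)) ≤ (1/2)*(W*τ)^p + C₁*(w₁*(τ-σ))^p
      have hwδ : (w₁*(τ-σ))^p = w₁^p * (τ-σ)^p := Real.mul_rpow hw₁ (by linarith)
      have h3 : W^(p-1) * (w₁ * (p * τ^(p-1) * (τ-σ)))
          = p * (W*τ)^(p-1) * (w₁*(τ-σ)) := by
        rw [← hWτ]; ring
      have h4 : W^(p-1) * (W * τ^p - w₁ * (p * τ^(p-1) * (τ-σ)))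
          = W^p * τ^p - p * (W*τ)^(p-1) * (w₁*(τ-σ)) := by
        rw [mul_sub, hWp, h3]
      rw [h4] at h2
      rw [hwδ, ← hWτp] at hy
      have hδp : 0 ≤ (τ - σ)^p := Real.rpow_nonneg (by linarith) p
      have h8 : 0 ≤ w₁^p * (τ-σ)^p := by positivity
      nlinarith

/-- Full pointwise inequality yielding the nonlocal Caccioppoli inequality with tail. -/
theorem stmt_19 (p : ℝ) (hp : 1 < p) :
    ∃ c : ℝ, 0 < c ∧ ∀ u₁ u₂ k σ τ : ℝ, 0 ≤ σ → 0 ≤ τ →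
      Real.sign (u₁ - u₂) * |u₁ - u₂| ^ (p - 1) *
          (max (u₁ - k) 0 * σ ^ p - max (u₂ - k) 0 * τ ^ p) ≥
        (1 / 2) * |max (u₁ - k) 0 - max (u₂ - k) 0| ^ p * (max σ τ) ^ p
          - c * (max (max (u₁ - k) 0) (max (u₂ - k) 0)) ^ p * |σ - τ| ^ p := by
  obtain ⟨c, hc, hkey⟩ := key_lem p hp
  refine ⟨c, hc, fun u₁ u₂ k σ τ hσ hτ => ?_⟩
  have hsign : ∀ a b : ℝ, b ≤ a → Real.sign (a - b) * |a - b| ^ (p-1) = (a-b)^(p-1) := by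
    intro a b hba
    rcases eq_or_lt_of_le hba with h | h
    · subst h
      simp [Real.sign_zero, Real.zero_rpow (show p - 1 ≠ 0 by intro h; linarith)]
    · rw [Real.sign_of_pos (by linarith), abs_of_pos (by linarith), one_mul]
  have hsub : ∀ a b : ℝ, b ≤ a → max a 0 - max b 0 ≤ a - b := by
    intro a b hba
    rcases le_or_gt 0 b with hb | hb
    · rw [max_eq_left (le_trans hb hba), max_eq_left hb]
    · rcases le_or_gt 0 a with ha | ha
      · rw [max_eq_left ha, max_eq_right hb.le]; linarith
      · rw [max_eq_right ha.le, max_eq_right hb.le]; linarith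
  rcases le_total u₂ u₁ with hord | hord
  · have h12 : u₂ - k ≤ u₁ - k := by linarith
    have hmono : max (u₂-k) 0 ≤ max (u₁-k) 0 := max_le_max h12 le_rfl
    have h := hkey (max (u₁-k) 0) (max (u₂-k) 0) (u₁ - u₂) σ τ (le_max_right _ _)
      hmono (by have := hsub (u₁-k) (u₂-k) h12; linarith) ?_ hσ hτ
    · rw [hsign u₁ u₂ hord]
      rw [abs_of_nonneg (by linarith : (0:ℝ) ≤ max (u₁-k) 0 - max (u₂-k) 0),
        max_eq_left hmono]
      exact h
    · intro hpos
      have h2 : max (u₂-k) 0 = u₂ - k := by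
        rcases max_cases (u₂-k) (0:ℝ) with ⟨h,_⟩|⟨h,h'⟩
        · exact h
        · rw [h] at hpos; linarith
      have hk : k < u₂ := by rw [h2] at hpos; linarith
      have h1 : max (u₁-k) 0 = u₁ - k := max_eq_left (by linarith)
      rw [h1, h2]; ring
  · have h12 : u₁ - k ≤ u₂ - k := by linarith
    have hmono : max (u₁-k) 0 ≤ max (u₂-k) 0 := max_le_max h12 le_rfl
    have h := hkey (max (u₂-k) 0) (max (u₁-k) 0) (u₂ - u₁) τ σ (le_max_right _ _)
      hmono (by have := hsub (u₂-k) (u₁-k) h12; linarith) ?_ hτ hσ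
    · have hs : Real.sign (u₁ - u₂) * |u₁ - u₂| ^ (p-1)
          = -((u₂-u₁)^(p-1)) := by
        rcases eq_or_lt_of_le hord with h' | h'
        · subst h'
          simp [Real.sign_zero, Real.zero_rpow (show p - 1 ≠ 0 by intro h'; linarith)]
        · rw [Real.sign_of_neg (by linarith), abs_sub_comm,
            abs_of_pos (by linarith), neg_one_mul]
      rw [hs]
      rw [abs_sub_comm (max (u₁-k) 0),
        abs_of_nonneg (by linarith : (0:ℝ) ≤ max (u₂-k) 0 - max (u₁-k) 0),
        max_comm σ τ, abs_sub_comm σ τ, max_eq_right hmono]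
      have : -((u₂-u₁)^(p-1)) * (max (u₁-k) 0 * σ^p - max (u₂-k) 0 * τ^p)
          = (u₂-u₁)^(p-1) * (max (u₂-k) 0 * τ^p - max (u₁-k) 0 * σ^p) := by ring
      rw [this]
      exact h
    · intro hpos
      have h2 : max (u₁-k) 0 = u₁ - k := by
        rcases max_cases (u₁-k) (0:ℝ) with ⟨h,_⟩|⟨h,h'⟩
        · exact h
        · rw [h] at hpos; linarith
      have hk : k < u₁ := by rw [h2] at hpos; linarith
      have h1 : max (u₂-k) 0 = u₂ - k := max_eq_left (by linarith)
      rw [h1, h2]; ring
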